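/- Let $A$ and $B$ be $\Omega$-algebras over a field $F$, let $Q$ be a unital associative algebra, and let $\rho \colon A \to B \otimes Q$ be a comeasuring. If $Q$ is finite dimensional, then the map $\rho^\vee \colon Q^* \otimes A \to B$, $\rho^\vee(q^*\otimes a) = q^*(a_{(1)})a_{(0)}$, is a measuring from $A$ to $B$ with respect to the coalgebra structure on $Q^*$ dual to the algebra structure on $Q$. -/

import Mathlib

open TensorProduct

universe u

variable (F : Type u) [Field F]

/-- Iterated tensor powers `A^{⊗ n}` (with `A^{⊗ 0} = F`), bundled as objects of
`ModuleCat F` to carry the module structure through the recursion. -/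
noncomputable def TPow (A : Type u) [AddCommGroup A] [Module F A] : ℕ → ModuleCat.{u} F
  | 0 => ModuleCat.of F F
  | n + 1 => ModuleCat.of F (A ⊗[F] TPow A n)

variable {A B Q : Type u} [AddCommGroup A] [Module F A] [AddCommGroup B] [Module F B]
  [Ring Q] [Algebra F Q]

/-- The maps `ρ_n : A^{⊗ n} → B^{⊗ n} ⊗ Q` induced by `ρ : A → B ⊗ Q`:
`ρ_0(α) = α 1_Q` and `ρ_n(a_1 ⊗ ⋯ ⊗ a_n) = (a_1)_{(0)} ⊗ ⋯ ⊗ (a_n)_{(0)} ⊗ (a_1)_{(1)} ⋯ (a_n)_{(1)}`. -/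
noncomputable def rhoPow (ρ : A →ₗ[F] B ⊗[F] Q) :
    ∀ n, (TPow F A n : Type u) →ₗ[F] (TPow F B n : Type u) ⊗[F] Q
  | 0 => LinearMap.toSpanSingleton F ((TPow F B 0 : Type u) ⊗[F] Q) ((1 : F) ⊗ₜ[F] (1 : Q))
  | n + 1 =>
    (LinearMap.lTensor (B ⊗[F] (TPow F B n : Type u)) (LinearMap.mul' F Q) :
      (B ⊗[F] (TPow F B n : Type u)) ⊗[F] (Q ⊗[F] Q) →ₗ[F] (B ⊗[F] (TPow F B n : Type u)) ⊗[F] Q) ∘ₗ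
      (TensorProduct.tensorTensorTensorComm F B Q (TPow F B n) Q).toLinearMap ∘ₗ
      TensorProduct.map ρ (rhoPow ρ n)

variable {P : Type u} [AddCommGroup P] [Module F P]

/-- The maps `ψ_n : P ⊗ A^{⊗ n} → B^{⊗ n}` induced by `ψ : P ⊗ A → B` relative to
comultiplication and counit maps on `P`:
`ψ_0(p) = ε(p)` and `ψ_n(p ⊗ a_1 ⊗ ⋯ ⊗ a_n) = ψ(p_{(1)} ⊗ a_1) ⊗ ⋯ ⊗ ψ(p_{(n)} ⊗ a_n)`. -/
noncomputable def psiPow (comul : P →ₗ[F] P ⊗[F] P) (counit : P →ₗ[F] F)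
    (ψ : P ⊗[F] A →ₗ[F] B) :
    ∀ n, P ⊗[F] (TPow F A n : Type u) →ₗ[F] (TPow F B n : Type u)
  | 0 => counit ∘ₗ (TensorProduct.rid F P).toLinearMap
  | n + 1 =>
    TensorProduct.map ψ (psiPow comul counit ψ n) ∘ₗ
      (TensorProduct.tensorTensorTensorComm F P P A (TPow F A n)).toLinearMap ∘ₗ
      LinearMap.rTensor (A ⊗[F] (TPow F A n : Type u)) comul

/-- The comultiplication on `Q^*` dual to the multiplication of a finite dimensional
algebra `Q`. -/
noncomputable def dualComul [FiniteDimensional F Q] :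
    Module.Dual F Q →ₗ[F] Module.Dual F Q ⊗[F] Module.Dual F Q :=
  (TensorProduct.dualDistribEquiv F Q Q).symm.toLinearMap ∘ₗ (LinearMap.mul' F Q).dualMap

/-- The counit on `Q^*` dual to the unit of `Q`, i.e. evaluation at `1`. -/
noncomputable def dualCounit : Module.Dual F Q →ₗ[F] F :=
  (LinearMap.applyₗ : Q →ₗ[F] (Q →ₗ[F] F) →ₗ[F] F) 1

/-- The map `ρ^∨ : Q^* ⊗ A → B`, `ρ^∨(q^* ⊗ a) = q^*(a_{(1)}) a_{(0)}`. -/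
noncomputable def dvee (ρ : A →ₗ[F] B ⊗[F] Q) : Module.Dual F Q ⊗[F] A →ₗ[F] B :=
  (TensorProduct.rid F B).toLinearMap ∘ₗ
    LinearMap.lTensor B (TensorProduct.lift (LinearMap.id : Module.Dual F Q →ₗ[F] Q →ₗ[F] F)) ∘ₗ
    (TensorProduct.leftComm F (Module.Dual F Q) B Q).toLinearMap ∘ₗ
    LinearMap.lTensor (Module.Dual F Q) ρ

/-! The dual `ρ ↦ ρ^∨` makes sense for any `ρ : M → N ⊗ Q` and is natural in `M` and `N`.
Since `Δ(q^*)` pairs with `q ⊗ r` as `q^*(q r)`, the map `ψ_n` built from `ρ^∨` is the dual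
`(ρ_n)^∨` of the map `ρ_n` built from `ρ`. Dualising the comeasuring identity
`ρ_t ∘ ω_A = (ω_B ⊗ id) ∘ ρ_s` and using naturality gives
`ψ_t ∘ (id ⊗ ω_A) = ω_B ∘ ψ_s`. -/

section Dvee

variable {F}
variable {M N M' N' : Type u} [AddCommGroup M] [Module F M] [AddCommGroup N] [Module F N]
  [AddCommGroup M'] [Module F M'] [AddCommGroup N'] [Module F N']

lemma dvee_tmul (ρ : M →ₗ[F] N ⊗[F] Q) (f : Module.Dual F Q) (m : M) :
    dvee F ρ (f ⊗ₜ m) = TensorProduct.rid F N (LinearMap.lTensor N f (ρ m)) := by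
  simp only [dvee, LinearMap.coe_comp, LinearEquiv.coe_coe, Function.comp_apply,
    LinearMap.lTensor_tmul]
  induction ρ m using TensorProduct.induction_on with
  | zero => simp
  | tmul n q => simp
  | add x y hx hy => simp only [tmul_add, map_add, hx, hy]

lemma dvee_comp_lTensor (ρ : M →ₗ[F] N ⊗[F] Q) (g : M' →ₗ[F] M) :
    dvee F ρ ∘ₗ LinearMap.lTensor (Module.Dual F Q) g = dvee F (ρ ∘ₗ g) := by
  ext f m
  simp [dvee_tmul]

lemma dvee_rTensor_comp (ρ : M →ₗ[F] N ⊗[F] Q) (g : N →ₗ[F] N') :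
    dvee F (LinearMap.rTensor Q g ∘ₗ ρ) = g ∘ₗ dvee F ρ := by
  ext f m
  simp only [TensorProduct.AlgebraTensorModule.curry_apply, TensorProduct.curry_apply,
    LinearMap.restrictScalars_self, LinearMap.coe_comp, Function.comp_apply, dvee_tmul]
  induction ρ m using TensorProduct.induction_on with
  | zero => simp
  | tmul n q => simp
  | add x y hx hy => simp only [map_add, hx, hy]

lemma dualDistrib_dualComul [FiniteDimensional F Q] (f : Module.Dual F Q) :
    TensorProduct.dualDistrib F Q Q (dualComul F f) = f ∘ₗ LinearMap.mul' F Q :=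
  (TensorProduct.dualDistribEquiv F Q Q).apply_symm_apply _

lemma map_contract_eq_dualDistrib (f₁ f₂ : Module.Dual F Q) :
    TensorProduct.map ((TensorProduct.rid F N).toLinearMap ∘ₗ LinearMap.lTensor N f₁)
        ((TensorProduct.rid F N').toLinearMap ∘ₗ LinearMap.lTensor N' f₂) =
      (TensorProduct.rid F (N ⊗[F] N')).toLinearMap ∘ₗ
        LinearMap.lTensor (N ⊗[F] N') (TensorProduct.dualDistrib F Q Q (f₁ ⊗ₜ f₂)) ∘ₗ
        (TensorProduct.tensorTensorTensorComm F N Q N' Q).toLinearMap := by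
  ext n q n' q'
  simp [TensorProduct.smul_tmul', TensorProduct.tmul_smul, smul_smul, mul_comm]

lemma map_dvee_tmul (ρ : M →ₗ[F] N ⊗[F] Q) (ρ' : M' →ₗ[F] N' ⊗[F] Q)
    (g : Module.Dual F Q ⊗[F] Module.Dual F Q) (m : M) (m' : M') :
    TensorProduct.map (dvee F ρ) (dvee F ρ')
        (TensorProduct.tensorTensorTensorComm F _ _ M M' (g ⊗ₜ (m ⊗ₜ m'))) =
      TensorProduct.rid F (N ⊗[F] N') (LinearMap.lTensor (N ⊗[F] N')
        (TensorProduct.dualDistrib F Q Q g)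
        (TensorProduct.tensorTensorTensorComm F N Q N' Q (ρ m ⊗ₜ ρ' m'))) := by
  induction g using TensorProduct.induction_on with
  | zero => simp
  | tmul f₁ f₂ =>
    simp only [TensorProduct.tensorTensorTensorComm_tmul, TensorProduct.map_tmul, dvee_tmul]
    exact LinearMap.congr_fun (map_contract_eq_dualDistrib f₁ f₂) (ρ m ⊗ₜ ρ' m')
  | add x y hx hy =>
    simp only [add_tmul, map_add, hx, hy, LinearMap.lTensor_add, LinearMap.add_apply]

lemma map_dvee_comp_dualComul [FiniteDimensional F Q] (ρ : M →ₗ[F] N ⊗[F] Q)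
    (ρ' : M' →ₗ[F] N' ⊗[F] Q) :
    TensorProduct.map (dvee F ρ) (dvee F ρ') ∘ₗ
        (TensorProduct.tensorTensorTensorComm F _ _ M M').toLinearMap ∘ₗ
        LinearMap.rTensor (M ⊗[F] M') (dualComul F) =
      dvee F (LinearMap.lTensor (N ⊗[F] N') (LinearMap.mul' F Q) ∘ₗ
        (TensorProduct.tensorTensorTensorComm F N Q N' Q).toLinearMap ∘ₗ
        TensorProduct.map ρ ρ') := by
  ext f m m'
  simp only [TensorProduct.AlgebraTensorModule.curry_apply, TensorProduct.curry_apply,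
    LinearMap.restrictScalars_self, LinearMap.coe_comp, LinearEquiv.coe_coe,
    Function.comp_apply, LinearMap.rTensor_tmul, map_dvee_tmul, dualDistrib_dualComul,
    dvee_tmul, TensorProduct.map_tmul, LinearMap.lTensor_comp]

lemma psiPow_dvee_eq_dvee_rhoPow [FiniteDimensional F Q] (ρ : A →ₗ[F] B ⊗[F] Q) :
    ∀ n, psiPow F (dualComul F) (dualCounit F) (dvee F ρ) n = dvee F (rhoPow F ρ n)
  | 0 => show dualCounit F ∘ₗ (TensorProduct.rid F (Module.Dual F Q)).toLinearMap =
        dvee F (LinearMap.toSpanSingleton F (F ⊗[F] Q) ((1 : F) ⊗ₜ[F] (1 : Q))) from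
      TensorProduct.ext' fun f α => by simp [dualCounit, dvee_tmul, mul_comm]
  | n + 1 => by
    rw [psiPow, psiPow_dvee_eq_dvee_rhoPow ρ n]
    exact map_dvee_comp_dualComul ρ (rhoPow F ρ n)

end Dvee

/-- Let `A`, `B` be `Ω`-algebras, `Q` a finite dimensional unital associative algebra and
`ρ : A → B ⊗ Q` a comeasuring.  Then `ρ^∨ : Q^* ⊗ A → B` is a measuring with respect to the
coalgebra structure on `Q^*` dual to the algebra structure of `Q`. -/
theorem dvee_measuring_of_comeasuring [FiniteDimensional F Q]
    {Ω : Type*} (s t : Ω → ℕ)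
    (opsA : ∀ ω : Ω, (TPow F A (s ω) : Type u) →ₗ[F] (TPow F A (t ω) : Type u))
    (opsB : ∀ ω : Ω, (TPow F B (s ω) : Type u) →ₗ[F] (TPow F B (t ω) : Type u))
    (ρ : A →ₗ[F] B ⊗[F] Q)
    (hρ : ∀ ω : Ω,
      rhoPow F ρ (t ω) ∘ₗ opsA ω = LinearMap.rTensor Q (opsB ω) ∘ₗ rhoPow F ρ (s ω)) :
    ∀ ω : Ω,
      psiPow F (dualComul F) (dualCounit F) (dvee F ρ) (t ω) ∘ₗ
          LinearMap.lTensor (Module.Dual F Q) (opsA ω) =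
        opsB ω ∘ₗ psiPow F (dualComul F) (dualCounit F) (dvee F ρ) (s ω) := by
  intro ω
  rw [psiPow_dvee_eq_dvee_rhoPow, psiPow_dvee_eq_dvee_rhoPow, dvee_comp_lTensor, hρ ω,
    dvee_rTensor_comp]
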